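/- Let q = 2^m, and let x₀ ∈ 𝔽_{q²} satisfy x₀^q + x₀ = 1. For α ∈ 𝔽_q^*, ξ ∈ 𝔽_q, and b ∈ 𝔽_{q²} with b^q + b = αξ + α^{2^{m−1}}, one has Tr₁^m(α ξ² x₀^{q+1} + ((b+b^q)x₀ + b^q)ξ) = Tr₁^m(α^{−1} b^{q+1}) + 1, where Tr₁^m is the absolute trace of 𝔽_q and α^{2^{m−1}} is the square root of α. -/

import Mathlib

/-- The absolute trace of a field of characteristic 2, as the sum of Frobenius powers. -/
def FTr (F : Type*) [Field F] (k : ℕ) (x : F) : F :=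
  ∑ i ∈ Finset.range k, x ^ 2 ^ i

/-! Put `β = α ^ 2 ^ (m - 1)`, the square root of `α` in `𝔽_q`, and `u = βξ ∈ 𝔽_q`. In characteristic 2
the trace telescopes on Artin–Schreier elements: `Tr (z² + z) = z^q + z`. The argument of the left trace
is `((u x₀)² + u x₀) + (u² + u) + ξ b`, and that of the right trace is `((b/β)² + b/β) + ξ b`. Since
`(u x₀)^q + u x₀ = u`, `u^q + u = 0` and `(b/β)^q + b/β = u + 1`, both sides equal `u + Tr (ξ b)`. -/

section CharTwo

variable {F : Type*} [Field F] [CharP F 2]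

lemma FTr_add (m : ℕ) (x y : F) : FTr F m (x + y) = FTr F m x + FTr F m y := by
  simp only [FTr, add_pow_char_pow, Finset.sum_add_distrib]

lemma FTr_sq_add_self (m : ℕ) (z : F) : FTr F m (z ^ 2 + z) = z ^ 2 ^ m + z := by
  have hsq : FTr F m (z ^ 2) = ∑ i ∈ Finset.range m, z ^ 2 ^ (i + 1) :=
    Finset.sum_congr rfl fun i _ => by rw [← pow_mul, pow_succ']
  rw [FTr_add, hsq, FTr, ← CharTwo.sub_eq_add, ← Finset.sum_sub_distrib,
    Finset.sum_range_sub (fun i => z ^ 2 ^ i), pow_zero, pow_one, CharTwo.sub_eq_add]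

lemma FTr_eq_FTr_norm_div_sq_add_one (m : ℕ) {x₀ β ξ b : F} (hβ : β ≠ 0)
    (hx₀ : x₀ ^ 2 ^ m = x₀ + 1) (hβq : β ^ 2 ^ m = β) (hξ : ξ ^ 2 ^ m = ξ)
    (hb : b ^ 2 ^ m = b + β ^ 2 * ξ + β) :
    FTr F m (β ^ 2 * ξ ^ 2 * x₀ ^ (2 ^ m + 1) + ((b + b ^ 2 ^ m) * x₀ + b ^ 2 ^ m) * ξ) =
      FTr F m ((β ^ 2)⁻¹ * b ^ (2 ^ m + 1)) + 1 := by
  have h2 : (2 : F) = 0 := CharTwo.two_eq_zero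
  have hLeft : β ^ 2 * ξ ^ 2 * x₀ ^ (2 ^ m + 1) + ((b + b ^ 2 ^ m) * x₀ + b ^ 2 ^ m) * ξ =
      ((β * ξ * x₀) ^ 2 + β * ξ * x₀) + ((β * ξ) ^ 2 + β * ξ) + ξ * b := by
    rw [pow_succ x₀, hx₀, hb]
    linear_combination (β ^ 2 * ξ ^ 2 * x₀ + b * ξ * x₀) * h2
  have hRight : (β ^ 2)⁻¹ * b ^ (2 ^ m + 1) = ((β⁻¹ * b) ^ 2 + β⁻¹ * b) + ξ * b := by
    rw [pow_succ b, hb]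
    field_simp
    ring
  have hu : (β * ξ) ^ 2 ^ m = β * ξ := by rw [mul_pow, hβq, hξ]
  have hux : (β * ξ * x₀) ^ 2 ^ m = β * ξ * x₀ + β * ξ := by rw [mul_pow, hu, hx₀, mul_add, mul_one]
  have hz : (β⁻¹ * b) ^ 2 ^ m = β⁻¹ * b + β * ξ + 1 := by
    rw [mul_pow, inv_pow, hβq, hb]
    field_simp
  rw [hLeft, hRight, FTr_add m _ (ξ * b), FTr_add m _ (ξ * b), FTr_add m ((β * ξ * x₀) ^ 2 + _),
    FTr_sq_add_self, FTr_sq_add_self, FTr_sq_add_self, hux, hu, hz]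
  linear_combination (β * ξ * x₀ + β * ξ - β⁻¹ * b - 1) * h2

end CharTwo

lemma charP_two_of_card_eq_two_pow {F : Type*} [Field F] [Fintype F] {n : ℕ}
    (hF : Fintype.card F = 2 ^ n) (hn : n ≠ 0) : CharP F 2 :=
  ringChar.of_eq <| FiniteField.even_card_iff_char_two.mpr <| by
    rw [hF, Nat.pow_mod, Nat.mod_self, zero_pow hn, Nat.zero_mod]

/-- For b with b^q + b = αξ + α^{1/2}:
Tr_1^m(αξ²x₀^{q+1} + ((b+b^q)x₀ + b^q)ξ) = Tr_1^m(α⁻¹ b^{q+1}) + 1. -/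
theorem stmt_18 (m : ℕ) (hm : 1 ≤ m) (F : Type*) [Field F] [Fintype F]
    (hF : Fintype.card F = (2 ^ m) ^ 2)
    (x₀ : F) (hx₀ : x₀ ^ (2 ^ m) + x₀ = 1)
    (α : F) (hα : α ≠ 0) (hαq : α ^ (2 ^ m) = α)
    (ξ : F) (hξ : ξ ^ (2 ^ m) = ξ)
    (b : F) (hb : b ^ (2 ^ m) + b = α * ξ + α ^ (2 ^ (m - 1))) :
    FTr F m (α * ξ ^ 2 * x₀ ^ (2 ^ m + 1) + ((b + b ^ (2 ^ m)) * x₀ + b ^ (2 ^ m)) * ξ) =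
      FTr F m (α⁻¹ * b ^ (2 ^ m + 1)) + 1 := by
  have : CharP F 2 := charP_two_of_card_eq_two_pow (hF.trans (pow_mul 2 m 2).symm) (by omega)
  have h2 : (2 : F) = 0 := CharTwo.two_eq_zero
  set β := α ^ 2 ^ (m - 1)
  have hβsq : β ^ 2 = α := by
    rw [← pow_mul, ← pow_succ, Nat.sub_add_cancel hm, hαq]
  have hβq : β ^ 2 ^ m = β := by rw [← pow_mul, mul_comm, pow_mul, hαq]
  have hβ : β ≠ 0 := pow_ne_zero _ hα
  have hx₀' : x₀ ^ 2 ^ m = x₀ + 1 := by linear_combination hx₀ - x₀ * h2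
  have hb' : b ^ 2 ^ m = b + β ^ 2 * ξ + β := by linear_combination hb - ξ * hβsq - b * h2
  simpa only [hβsq] using FTr_eq_FTr_norm_div_sq_add_one m hβ hx₀' hβq hξ hb'
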